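/- Let (f_j) be a sequence of admissible damage functions with limit values ℓ_j of (1−s)f_j(s) as s → 1⁻ satisfying ℓ_j ↑ ∞, such that f_j ≤ f_{j+1} pointwise and f_j(s) ↑ ∞ for every s ∈ (0,1). Then the corresponding surface energy densities satisfy g_j ≤ g_{j+1} pointwise and g_j(s) → χ_{(0,∞)}(s) for every s ∈ [0,∞), i.e. g_j(0) = 0 for all j and g_j(s) → 1 for every s > 0. -/

import Mathlib

open MeasureTheory Set Filter Topology

/-- A pair of `H¹` functions on the interval `(0,T)`, described through their
absolutely continuous representatives `a`, `b` together with their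
square-integrable weak derivatives `da`, `db`. -/
structure H1Pair (T : ℝ) where
  a : ℝ → ℝ
  b : ℝ → ℝ
  da : ℝ → ℝ
  db : ℝ → ℝ
  da_mem : MeasureTheory.MemLp da 2 (MeasureTheory.volume.restrict (Set.Ioo (0:ℝ) T))
  db_mem : MeasureTheory.MemLp db 2 (MeasureTheory.volume.restrict (Set.Ioo (0:ℝ) T))
  a_ftc : ∀ x ∈ Set.Icc (0:ℝ) T, a x = a 0 + ∫ t in Set.Ioc (0:ℝ) x, da t
  b_ftc : ∀ x ∈ Set.Icc (0:ℝ) T, b x = b 0 + ∫ t in Set.Ioc (0:ℝ) x, db t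

/-- Membership in the admissible class `U_s(0,T)`: `0 ≤ β ≤ 1`, `α(0)=0`, `α(T)=s`,
`β(0)=β(T)=1`. -/
def H1Pair.Admissible {T : ℝ} (s : ℝ) (P : H1Pair T) : Prop :=
  (∀ t ∈ Set.Icc (0:ℝ) T, P.b t ∈ Set.Icc (0:ℝ) 1) ∧
  P.a 0 = 0 ∧ P.a T = s ∧ P.b 0 = 1 ∧ P.b T = 1

/-- The continuous extension of `x ↦ (1 - x) * f x` to `[0,1]`, with value `l` at `1`. -/
noncomputable def damageExt (f : ℝ → ℝ) (l : ℝ) (x : ℝ) : ℝ :=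
  if x = 1 then l else (1 - x) * f x

/-- The surface energy of a pair: `∫₀¹ |1-β| √(f(β)² |α'|² + |β'|²) dt`, written as
`∫₀¹ √(((1-β) f(β))² |α'|² + (1-β)² |β'|²) dt`, where at points with `β = 1` the
product `(1-β) f(β)` is interpreted as `l`. -/
noncomputable def surfEnergy (f : ℝ → ℝ) (l : ℝ) (P : H1Pair 1) : ENNReal :=
  ∫⁻ t in Set.Ioo (0:ℝ) 1,
    ENNReal.ofReal (Real.sqrt ((damageExt f l (P.b t))^2 * (P.da t)^2
      + (1 - P.b t)^2 * (P.db t)^2))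

/-- The surface energy density `g(s)`. -/
noncomputable def surfDensity (f : ℝ → ℝ) (l : ℝ) (s : ℝ) : ℝ :=
  (⨅ (P : H1Pair 1) (_ : P.Admissible s), surfEnergy f l P).toReal

/-- `f` is an admissible damage function with limit value `l`: it is continuous,
nondecreasing and nonnegative on `[0,1)`, vanishes exactly at `0`, `l ∈ (0,∞)`, and
`(1-s) f(s) → l` as `s → 1⁻`. -/
def AdmissibleDamage (f : ℝ → ℝ) (l : ℝ) : Prop :=
  ContinuousOn f (Set.Ico 0 1) ∧
  MonotoneOn f (Set.Ico 0 1) ∧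
  (∀ x ∈ Set.Ico (0:ℝ) 1, 0 ≤ f x) ∧
  (∀ x ∈ Set.Ico (0:ℝ) 1, (f x = 0 ↔ x = 0)) ∧
  0 < l ∧
  Filter.Tendsto (fun x => (1 - x) * f x) (nhdsWithin 1 (Set.Iio 1)) (nhds l)



lemma sym_lemma {c d : ℝ} {h : ℝ → ℝ} (hint : IntegrableOn h (Ioc c d)) :
    ∫ t in Ioc c d, (∫ u in Ioc c t, h u) * h t = (∫ t in Ioc c d, h t)^2 / 2 := by
  set μ := volume.restrict (Ioc c d) with hμ
  have hμle : μ ≤ volume := Measure.restrict_le_self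
  set F : ℝ × ℝ → ℝ := ({p : ℝ × ℝ | p.1 ≤ p.2}).indicator (fun p => h p.1 * h p.2) with hF
  have hmeas : MeasurableSet {p : ℝ × ℝ | p.1 ≤ p.2} :=
    measurableSet_le measurable_fst measurable_snd
  have hprod : Integrable (fun p : ℝ × ℝ => h p.1 * h p.2) (μ.prod μ) :=
    Integrable.mul_prod hint hint
  have hFint : Integrable F (μ.prod μ) := hprod.indicator hmeas
  -- step 1 : rewrite LHS as double integral
  have step1 : ∫ t in Ioc c d, (∫ u in Ioc c t, h u) * h t
      = ∫ t, (∫ u, F (u, t) ∂μ) ∂μ := by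
    apply setIntegral_congr_fun measurableSet_Ioc
    intro t ht
    have h1 : ∀ u : ℝ, F (u, t) = (Iic t).indicator (fun u => h u * h t) u := by
      intro u
      simp only [hF, indicator, mem_setOf_eq, mem_Iic]
    simp only [h1]
    rw [integral_indicator measurableSet_Iic]
    have h2 : Ioc c d ∩ Iic t = Ioc c t := by
      rw [Set.Ioc_inter_Iic, min_eq_right ht.2]
    rw [hμ, Measure.restrict_restrict measurableSet_Iic, Set.inter_comm, h2,
      integral_mul_const]
  -- step 2 : the double integral equals ∫ F ∘ swap over product
  have hswapint : Integrable (fun p : ℝ × ℝ => F (p.2, p.1)) (μ.prod μ) := by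
    have := hFint.swap
    exact this
  have step2 : ∫ t, (∫ u, F (u, t) ∂μ) ∂μ = ∫ p : ℝ × ℝ, F (p.2, p.1) ∂(μ.prod μ) := by
    exact integral_integral (f := fun t u => F (u, t)) hswapint
  -- ∫ F ∘ swap = ∫ F
  have step3 : ∫ p : ℝ × ℝ, F (p.2, p.1) ∂(μ.prod μ) = ∫ p, F p ∂(μ.prod μ) := by
    have := integral_prod_swap (μ := μ) (ν := μ) F
    simpa [Prod.swap] using this
  -- diagonal is null
  have hdiagmeas : MeasurableSet {p : ℝ × ℝ | p.1 = p.2} :=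
    measurableSet_eq_fun measurable_fst measurable_snd
  have hdiag : (μ.prod μ) {p : ℝ × ℝ | p.1 = p.2} = 0 := by
    rw [Measure.prod_apply hdiagmeas]
    have : ∀ x : ℝ, μ (Prod.mk x ⁻¹' {p : ℝ × ℝ | p.1 = p.2}) = 0 := by
      intro x
      have hpre : Prod.mk x ⁻¹' {p : ℝ × ℝ | p.1 = p.2} = {x} := by
        ext y; simp [eq_comm]
      rw [hpre]
      exact le_antisymm (le_trans (hμle _) (by simp)) zero_le
    simp [this]
  -- sum identity
  have hsum : ∀ p : ℝ × ℝ, F (p.2, p.1) + F p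
      = h p.1 * h p.2 + ({p : ℝ × ℝ | p.1 = p.2}).indicator (fun p => h p.1 * h p.2) p := by
    intro p
    simp only [hF, indicator, mem_setOf_eq]
    rcases lt_trichotomy p.1 p.2 with hlt | heq | hgt
    · simp [hlt.le, not_le.2 hlt, hlt.ne]
    · simp [heq, mul_comm]
    · simp [hgt.le, not_le.2 hgt, hgt.ne', mul_comm]
  have hdiag0 : ∫ p, ({p : ℝ × ℝ | p.1 = p.2}).indicator
      (fun p : ℝ × ℝ => h p.1 * h p.2) p ∂(μ.prod μ) = 0 := by
    apply integral_eq_zero_of_ae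
    filter_upwards [measure_eq_zero_iff_ae_notMem.mp hdiag] with p hp
    simp only [Set.indicator_apply, mem_setOf_eq] at hp ⊢
    simp [hp]
  have hint2 : Integrable (fun p : ℝ × ℝ => h p.1 * h p.2
      + ({p : ℝ × ℝ | p.1 = p.2}).indicator (fun p : ℝ × ℝ => h p.1 * h p.2) p) (μ.prod μ) :=
    hprod.add (hprod.indicator hdiagmeas)
  have key : (∫ p, F (p.2, p.1) ∂(μ.prod μ)) + (∫ p, F p ∂(μ.prod μ))
      = (∫ t in Ioc c d, h t)^2 := by
    rw [← integral_add hswapint hFint]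
    calc ∫ p : ℝ × ℝ, (F (p.2, p.1) + F p) ∂(μ.prod μ)
        = ∫ p : ℝ × ℝ, (h p.1 * h p.2
            + ({p : ℝ × ℝ | p.1 = p.2}).indicator (fun p : ℝ × ℝ => h p.1 * h p.2) p)
            ∂(μ.prod μ) := by
          exact integral_congr_ae (Filter.Eventually.of_forall hsum)
      _ = (∫ t in Ioc c d, h t)^2 := by
          rw [integral_add hprod (hprod.indicator hdiagmeas), hdiag0, add_zero,
            integral_prod_mul, sq]
  rw [step1, step2]
  have : ∫ p : ℝ × ℝ, F (p.2, p.1) ∂(μ.prod μ) = (∫ t in Ioc c d, h t)^2 / 2 := by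
    rw [step3] at key ⊢
    linarith [key]
  exact this

lemma chain_quad {c d : ℝ} (hcd : c ≤ d) {h bf : ℝ → ℝ} (hint : IntegrableOn h (Ioc c d))
    (hb : ∀ x ∈ Icc c d, bf x = bf c + ∫ u in Ioc c x, h u) :
    ∫ t in Ioc c d, (1 - bf t) * h t = (1 - bf c)^2/2 - (1 - bf d)^2/2 := by
  set μ := volume.restrict (Ioc c d) with hμ
  set G : ℝ → ℝ := fun t => ∫ u in Ioc c t, h u with hG
  set F : ℝ × ℝ → ℝ := ({p : ℝ × ℝ | p.1 ≤ p.2}).indicator (fun p => h p.1 * h p.2) with hF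
  have hmeas : MeasurableSet {p : ℝ × ℝ | p.1 ≤ p.2} :=
    measurableSet_le measurable_fst measurable_snd
  have hprod : Integrable (fun p : ℝ × ℝ => h p.1 * h p.2) (μ.prod μ) :=
    Integrable.mul_prod hint hint
  have hFint : Integrable F (μ.prod μ) := hprod.indicator hmeas
  have hmarg : ∀ t ∈ Ioc c d, (∫ u, F (u, t) ∂μ) = G t * h t := by
    intro t ht
    have h1 : ∀ u : ℝ, F (u, t) = (Iic t).indicator (fun u => h u * h t) u := by
      intro u
      simp only [hF, indicator, mem_setOf_eq, mem_Iic]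
    simp only [h1]
    rw [integral_indicator measurableSet_Iic]
    have h2 : Ioc c d ∩ Iic t = Ioc c t := by
      rw [Set.Ioc_inter_Iic, min_eq_right ht.2]
    rw [hμ, Measure.restrict_restrict measurableSet_Iic, Set.inter_comm, h2,
      integral_mul_const]
  have hGh_int : Integrable (fun t => G t * h t) μ := by
    have h1 : Integrable (fun t => ∫ u, F (u, t) ∂μ) μ := hFint.integral_prod_right
    apply h1.congr
    filter_upwards [ae_restrict_mem measurableSet_Ioc] with t ht
    exact hmarg t ht
  have hsym : ∫ t in Ioc c d, G t * h t = (∫ t in Ioc c d, h t)^2 / 2 := by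
    -- reuse sym_lemma (assume available)
    exact sym_lemma hint
  have hconst : Integrable (fun t => (1 - bf c) * h t) μ := hint.const_mul _
  have hcongr : ∫ t in Ioc c d, (1 - bf t) * h t
      = ∫ t in Ioc c d, ((1 - bf c) * h t - G t * h t) := by
    apply setIntegral_congr_fun measurableSet_Ioc
    intro t ht
    have := hb t ⟨le_of_lt ht.1, ht.2⟩
    show (1 - bf t) * h t = (1 - bf c) * h t - G t * h t
    have hGt : G t = ∫ u in Ioc c t, h u := rfl
    rw [this, hGt]; ring
  rw [hcongr, integral_sub hconst hGh_int, integral_const_mul, hsym]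
  have hd : bf d = bf c + ∫ u in Ioc c d, h u := hb d ⟨hcd, le_refl d⟩
  set Δ := ∫ u in Ioc c d, h u
  rw [hd]
  ring



lemma finiteIoo : IsFiniteMeasure (volume.restrict (Ioo (0:ℝ) 1)) :=
  ⟨by rw [Measure.restrict_apply_univ]; simp [Real.volume_Ioo]⟩

lemma nice_deriv {dd : ℝ → ℝ} (hmem : MemLp dd 2 (volume.restrict (Ioo (0:ℝ) 1))) :
    ∃ g : ℝ → ℝ, Measurable g ∧ Integrable g volume ∧
      (∀ᵐ t ∂(volume.restrict (Ioo (0:ℝ) 1)), dd t = g t) ∧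
      (∀ x ∈ Icc (0:ℝ) 1, ∫ u in Ioc 0 x, dd u = ∫ u in Ioc 0 x, g u) := by
  haveI := finiteIoo
  have hsm := hmem.aestronglyMeasurable
  set m := hsm.mk dd with hm
  have hae : dd =ᵐ[volume.restrict (Ioo (0:ℝ) 1)] m := hsm.ae_eq_mk
  set g : ℝ → ℝ := (Ioo (0:ℝ) 1).indicator m with hgdef
  have hddint : IntegrableOn dd (Ioo (0:ℝ) 1) :=
    memLp_one_iff_integrable.mp (hmem.mono_exponent one_le_two)
  have hmint : IntegrableOn m (Ioo (0:ℝ) 1) := hddint.congr hae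
  have hgmeas : Measurable g :=
    (hsm.stronglyMeasurable_mk.measurable).indicator measurableSet_Ioo
  have hgint : Integrable g volume := (integrable_indicator_iff measurableSet_Ioo).2 hmint
  have hg_ae : dd =ᵐ[volume.restrict (Ioo (0:ℝ) 1)] g := by
    filter_upwards [hae, ae_restrict_mem measurableSet_Ioo] with t h1 h2
    rw [h1, hgdef, indicator_of_mem h2]
  refine ⟨g, hgmeas, hgint, hg_ae, ?_⟩
  intro x hx
  have hres : volume.restrict (Ioc (0:ℝ) x) ≤ volume.restrict (Ioo (0:ℝ) 1) := by
    rw [Measure.restrict_congr_set Ioo_ae_eq_Ioc]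
    exact Measure.restrict_mono (Ioc_subset_Ioc le_rfl hx.2) le_rfl
  exact integral_congr_ae (hg_ae.filter_mono (ae_mono hres))

lemma le_sqrt_right (A B C D : ℝ) : |C*D| ≤ Real.sqrt (A^2*B^2 + C^2*D^2) := by
  calc |C*D| = Real.sqrt ((C*D)^2) := (Real.sqrt_sq_eq_abs _).symm
    _ ≤ _ := Real.sqrt_le_sqrt (by nlinarith [sq_nonneg (A*B)])

lemma le_sqrt_left (A B C D : ℝ) : |A*B| ≤ Real.sqrt (A^2*B^2 + C^2*D^2) := by
  calc |A*B| = Real.sqrt ((A*B)^2) := (Real.sqrt_sq_eq_abs _).symm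
    _ ≤ _ := Real.sqrt_le_sqrt (by nlinarith [sq_nonneg (C*D)])

lemma setInt_const_on {c d v : ℝ} (hcd : c ≤ d) {f : ℝ → ℝ} (hf : ∀ t ∈ Ioc c d, f t = v) :
    ∫ t in Ioc c d, f t = v * (d - c) := by
  rw [setIntegral_congr_fun measurableSet_Ioc hf, setIntegral_const, Real.volume_real_Ioc_of_le hcd,
    smul_eq_mul, mul_comm]

lemma intOn_of_bounded {f : ℝ → ℝ} (hf : Measurable f) (C : ℝ) (h : ∀ x, |f x| ≤ C)
    {c d : ℝ} : IntegrableOn f (Ioc c d) := by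
  apply Measure.integrableOn_of_bounded (M := C)
  · simp [Real.volume_Ioc]
  · exact hf.aestronglyMeasurable
  · exact Eventually.of_forall (by simpa using h)

lemma memL2_of_bounded {f : ℝ → ℝ} (hf : Measurable f) (C : ℝ) (h : ∀ x, |f x| ≤ C) :
    MemLp f 2 (volume.restrict (Ioo (0:ℝ) 1)) := by
  haveI := finiteIoo
  exact MemLp.of_bound hf.aestronglyMeasurable C (Eventually.of_forall (by simpa using h))

lemma da_bridge_meas (s : ℝ) :
    Measurable (fun t : ℝ => if t ≤ 1/3 then (0:ℝ) else if t ≤ 2/3 then 3*s else 0) := by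
  apply Measurable.ite (measurableSet_le measurable_id measurable_const) measurable_const
  exact Measurable.ite (measurableSet_le measurable_id measurable_const)
    measurable_const measurable_const

lemma db_bridge_meas :
    Measurable (fun t : ℝ => if t ≤ 1/3 then (-3:ℝ) else if t ≤ 2/3 then 0 else 3) := by
  apply Measurable.ite (measurableSet_le measurable_id measurable_const) measurable_const
  exact Measurable.ite (measurableSet_le measurable_id measurable_const)
    measurable_const measurable_const

noncomputable def bridge (s : ℝ) : H1Pair 1 where
  a := fun t => s * max 0 (min (3*t - 1) 1)
  b := fun t => max (1 - 3*t) 0 + max (3*t - 2) 0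
  da := fun t => if t ≤ 1/3 then 0 else if t ≤ 2/3 then 3*s else 0
  db := fun t => if t ≤ 1/3 then -3 else if t ≤ 2/3 then 0 else 3
  da_mem := by
    apply memL2_of_bounded (da_bridge_meas s) (3*|s|)
    intro x
    split_ifs <;> simp [abs_mul, abs_of_nonneg] <;> positivity
  db_mem := by
    apply memL2_of_bounded db_bridge_meas 3
    intro x
    split_ifs <;> norm_num
  a_ftc := by
    intro x hx
    have hint : ∀ c d : ℝ, IntegrableOn (fun t : ℝ => if t ≤ 1/3 then (0:ℝ) else if t ≤ 2/3 then 3*s else 0) (Ioc c d) := by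
      intro c d
      apply intOn_of_bounded (da_bridge_meas s) (3*|s|)
      intro t; split_ifs <;> simp [abs_mul, abs_of_nonneg, abs_of_nonpos] <;> nlinarith [abs_nonneg s]
    rcases le_or_gt x (1/3) with h1 | h1
    · have hI : ∫ t in Ioc (0:ℝ) x, (fun t : ℝ => if t ≤ 1/3 then (0:ℝ) else if t ≤ 2/3 then 3*s else 0) t = ((0:ℝ)) * (x - 0) :=
        setInt_const_on (v := (0:ℝ)) hx.1
          (fun t ht => by simp only [if_pos (le_trans ht.2 h1)])
      rw [hI]; beta_reduce
      rw [show s * max 0 (min (3*(0:ℝ) - 1) 1) = 0 from by norm_num,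
        min_eq_left (by linarith : 3*x - 1 ≤ 1), max_eq_left (by linarith : 3*x - 1 ≤ 0)]
      ring
    · rcases le_or_gt x (2/3) with h2 | h2
      · have hsp : Ioc (0:ℝ) x = Ioc 0 (1/3) ∪ Ioc (1/3) x :=
          (Set.Ioc_union_Ioc_eq_Ioc (by norm_num) h1.le).symm
        have hI : ∫ t in Ioc (0:ℝ) x, (fun t : ℝ => if t ≤ 1/3 then (0:ℝ) else if t ≤ 2/3 then 3*s else 0) t
            = ((0:ℝ)) * ((1:ℝ)/3 - 0) + (3*s) * (x - 1/3) := by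
          rw [hsp, setIntegral_union (Set.Ioc_disjoint_Ioc_of_le le_rfl) measurableSet_Ioc
              (hint 0 (1/3)) (hint (1/3) x),
            setInt_const_on (v := (0:ℝ)) (by norm_num)
              (fun t ht => by simp only [if_pos ht.2]),
            setInt_const_on (v := 3*s) h1.le
              (fun t ht => by rw [if_neg (not_le.2 ht.1), if_pos (le_trans ht.2 h2)])]
        rw [hI]; beta_reduce
        rw [show s * max 0 (min (3*(0:ℝ) - 1) 1) = 0 from by norm_num,
          min_eq_left (by linarith : 3*x - 1 ≤ 1), max_eq_right (by linarith : 0 ≤ 3*x - 1)]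
        ring
      · have hsp : Ioc (0:ℝ) x = Ioc 0 (1/3) ∪ (Ioc (1/3) (2/3) ∪ Ioc (2/3) x) := by
          rw [Set.Ioc_union_Ioc_eq_Ioc (by norm_num : (1:ℝ)/3 ≤ 2/3) h2.le,
            Set.Ioc_union_Ioc_eq_Ioc (by norm_num : (0:ℝ) ≤ 1/3) (by linarith)]
        have hu : IntegrableOn (fun t : ℝ => if t ≤ 1/3 then (0:ℝ) else if t ≤ 2/3 then 3*s else 0) (Ioc (1/3) (2/3) ∪ Ioc (2/3) x) := by
          rw [Set.Ioc_union_Ioc_eq_Ioc (by norm_num : (1:ℝ)/3 ≤ 2/3) h2.le]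
          exact hint _ _
        have hI : ∫ t in Ioc (0:ℝ) x, (fun t : ℝ => if t ≤ 1/3 then (0:ℝ) else if t ≤ 2/3 then 3*s else 0) t
            = ((0:ℝ)) * ((1:ℝ)/3 - 0) + ((3*s) * ((2:ℝ)/3 - 1/3) + ((0:ℝ)) * (x - 2/3)) := by
          rw [hsp, setIntegral_union (by
              rw [Set.Ioc_union_Ioc_eq_Ioc (by norm_num : (1:ℝ)/3 ≤ 2/3) h2.le]
              exact (Set.Ioc_disjoint_Ioc_of_le le_rfl)) (measurableSet_Ioc.union measurableSet_Ioc)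
              (hint 0 (1/3)) hu,
            setIntegral_union (Set.Ioc_disjoint_Ioc_of_le le_rfl) measurableSet_Ioc
              (hint (1/3) (2/3)) (hint (2/3) x),
            setInt_const_on (v := (0:ℝ)) (by norm_num) (fun t ht => by simp only [if_pos ht.2]),
            setInt_const_on (v := 3*s) (by norm_num)
              (fun t ht => by rw [if_neg (not_le.2 ht.1), if_pos ht.2]),
            setInt_const_on (v := (0:ℝ)) h2.le (fun t ht => by
              rw [if_neg (not_le.2 (lt_trans (by norm_num) ht.1)), if_neg (not_le.2 ht.1)])]
        rw [hI]; beta_reduce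
        rw [show s * max 0 (min (3*(0:ℝ) - 1) 1) = 0 from by norm_num,
          min_eq_right (by linarith : 1 ≤ 3*x - 1), max_eq_right (by norm_num : (0:ℝ) ≤ 1)]
        ring
  b_ftc := by
    intro x hx
    have hint : ∀ c d : ℝ, IntegrableOn (fun t : ℝ => if t ≤ 1/3 then (-3:ℝ) else if t ≤ 2/3 then 0 else 3) (Ioc c d) := by
      intro c d
      apply intOn_of_bounded db_bridge_meas 3
      intro t; split_ifs <;> simp [abs_mul, abs_of_nonneg, abs_of_nonpos] <;> nlinarith [abs_nonneg s]
    rcases le_or_gt x (1/3) with h1 | h1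
    · have hI : ∫ t in Ioc (0:ℝ) x, (fun t : ℝ => if t ≤ 1/3 then (-3:ℝ) else if t ≤ 2/3 then 0 else 3) t = ((-3:ℝ)) * (x - 0) :=
        setInt_const_on (v := (-3:ℝ)) hx.1
          (fun t ht => by simp only [if_pos (le_trans ht.2 h1)])
      rw [hI]; beta_reduce
      rw [show max (1 - 3*(0:ℝ)) 0 + max (3*(0:ℝ) - 2) 0 = 1 from by norm_num,
        max_eq_left (by linarith : (0:ℝ) ≤ 1 - 3*x), max_eq_right (by linarith : 3*x - 2 ≤ 0)]
      ring
    · rcases le_or_gt x (2/3) with h2 | h2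
      · have hsp : Ioc (0:ℝ) x = Ioc 0 (1/3) ∪ Ioc (1/3) x :=
          (Set.Ioc_union_Ioc_eq_Ioc (by norm_num) h1.le).symm
        have hI : ∫ t in Ioc (0:ℝ) x, (fun t : ℝ => if t ≤ 1/3 then (-3:ℝ) else if t ≤ 2/3 then 0 else 3) t
            = ((-3:ℝ)) * ((1:ℝ)/3 - 0) + ((0:ℝ)) * (x - 1/3) := by
          rw [hsp, setIntegral_union (Set.Ioc_disjoint_Ioc_of_le le_rfl) measurableSet_Ioc
              (hint 0 (1/3)) (hint (1/3) x),
            setInt_const_on (v := (-3:ℝ)) (by norm_num)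
              (fun t ht => by simp only [if_pos ht.2]),
            setInt_const_on (v := (0:ℝ)) h1.le
              (fun t ht => by rw [if_neg (not_le.2 ht.1), if_pos (le_trans ht.2 h2)])]
        rw [hI]; beta_reduce
        rw [show max (1 - 3*(0:ℝ)) 0 + max (3*(0:ℝ) - 2) 0 = 1 from by norm_num,
          max_eq_right (by linarith : 1 - 3*x ≤ 0), max_eq_right (by linarith : 3*x - 2 ≤ 0)]
        ring
      · have hsp : Ioc (0:ℝ) x = Ioc 0 (1/3) ∪ (Ioc (1/3) (2/3) ∪ Ioc (2/3) x) := by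
          rw [Set.Ioc_union_Ioc_eq_Ioc (by norm_num : (1:ℝ)/3 ≤ 2/3) h2.le,
            Set.Ioc_union_Ioc_eq_Ioc (by norm_num : (0:ℝ) ≤ 1/3) (by linarith)]
        have hu : IntegrableOn (fun t : ℝ => if t ≤ 1/3 then (-3:ℝ) else if t ≤ 2/3 then 0 else 3) (Ioc (1/3) (2/3) ∪ Ioc (2/3) x) := by
          rw [Set.Ioc_union_Ioc_eq_Ioc (by norm_num : (1:ℝ)/3 ≤ 2/3) h2.le]
          exact hint _ _
        have hI : ∫ t in Ioc (0:ℝ) x, (fun t : ℝ => if t ≤ 1/3 then (-3:ℝ) else if t ≤ 2/3 then 0 else 3) t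
            = ((-3:ℝ)) * ((1:ℝ)/3 - 0) + (((0:ℝ)) * ((2:ℝ)/3 - 1/3) + ((3:ℝ)) * (x - 2/3)) := by
          rw [hsp, setIntegral_union (by
              rw [Set.Ioc_union_Ioc_eq_Ioc (by norm_num : (1:ℝ)/3 ≤ 2/3) h2.le]
              exact (Set.Ioc_disjoint_Ioc_of_le le_rfl)) (measurableSet_Ioc.union measurableSet_Ioc)
              (hint 0 (1/3)) hu,
            setIntegral_union (Set.Ioc_disjoint_Ioc_of_le le_rfl) measurableSet_Ioc
              (hint (1/3) (2/3)) (hint (2/3) x),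
            setInt_const_on (v := (-3:ℝ)) (by norm_num) (fun t ht => by simp only [if_pos ht.2]),
            setInt_const_on (v := (0:ℝ)) (by norm_num)
              (fun t ht => by rw [if_neg (not_le.2 ht.1), if_pos ht.2]),
            setInt_const_on (v := (3:ℝ)) h2.le (fun t ht => by
              rw [if_neg (not_le.2 (lt_trans (by norm_num) ht.1)), if_neg (not_le.2 ht.1)])]
        rw [hI]; beta_reduce
        rw [show max (1 - 3*(0:ℝ)) 0 + max (3*(0:ℝ) - 2) 0 = 1 from by norm_num,
          max_eq_right (by linarith : 1 - 3*x ≤ 0), max_eq_left (by linarith : (0:ℝ) ≤ 3*x - 2)]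
        ring

lemma bridge_admissible (s : ℝ) : (bridge s).Admissible s := by
  refine ⟨?_, ?_, ?_, ?_, ?_⟩
  · intro t ht
    constructor
    · exact add_nonneg (le_max_right _ _) (le_max_right _ _)
    · show max (1 - 3*t) 0 + max (3*t - 2) 0 ≤ 1
      rcases le_or_gt t (1/3) with h | h
      · have h2 : max (3*t - 2) 0 = 0 := max_eq_right (by linarith [ht.1])
        have h1 : max (1 - 3*t) 0 ≤ 1 := max_le (by linarith [ht.1]) (by norm_num)
        linarith
      · have h1 : max (1 - 3*t) 0 = 0 := max_eq_right (by linarith)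
        have h2 : max (3*t - 2) 0 ≤ 1 := max_le (by linarith [ht.2]) (by norm_num)
        linarith
  · show s * max 0 (min (3*0 - 1) 1) = 0
    norm_num
  · show s * max 0 (min (3*1 - 1) 1) = s
    norm_num
  · show max (1 - 3*0) 0 + max (3*0 - 2) 0 = 1
    norm_num
  · show max (1 - 3*1) 0 + max (3*1 - 2) 0 = 1
    norm_num

lemma bridge_energy {f : ℝ → ℝ} {l : ℝ} (hf0 : f 0 = 0) (s : ℝ) :
    surfEnergy f l (bridge s) = 1 := by
  have hsplit : Ioo (0:ℝ) 1 = Ioc 0 (1/3) ∪ (Ioc (1/3) (2/3) ∪ Ioo (2/3) 1) := by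
    ext t
    simp only [mem_Ioo, mem_Ioc, mem_union]
    constructor
    · rintro ⟨h0, h1⟩
      rcases le_or_gt t (1/3) with h | h
      · exact Or.inl ⟨h0, h⟩
      · rcases le_or_gt t (2/3) with h' | h'
        · exact Or.inr (Or.inl ⟨h, h'⟩)
        · exact Or.inr (Or.inr ⟨h', h1⟩)
    · rintro (⟨h0, h1⟩ | ⟨h0, h1⟩ | ⟨h0, h1⟩) <;> constructor <;> linarith
  have hd1 : Disjoint (Ioc (0:ℝ) (1/3)) (Ioc (1/3) (2/3) ∪ Ioo (2/3) 1) := by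
    rw [Set.disjoint_left]
    rintro t ⟨_, h2⟩ (⟨h3, _⟩ | ⟨h3, _⟩) <;> linarith
  have hd2 : Disjoint (Ioc (1/3:ℝ) (2/3)) (Ioo (2/3) 1) := by
    rw [Set.disjoint_left]
    rintro t ⟨_, h2⟩ ⟨h3, _⟩; linarith
  rw [surfEnergy, hsplit,
    lintegral_union (measurableSet_Ioc.union measurableSet_Ioo) hd1,
    lintegral_union measurableSet_Ioo hd2]
  have hp1 : ∫⁻ t in Ioc (0:ℝ) (1/3),
      ENNReal.ofReal (Real.sqrt ((damageExt f l ((bridge s).b t))^2 * ((bridge s).da t)^2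
        + (1 - (bridge s).b t)^2 * ((bridge s).db t)^2)) = ENNReal.ofReal (1/2) := by
    rw [setLIntegral_congr_fun measurableSet_Ioc
      (fun t ht => ?_) (g := fun t => ENNReal.ofReal (9*t))]
    · have hint9 : IntegrableOn (fun t : ℝ => 9*t) (Ioc (0:ℝ) (1/3)) :=
        Continuous.integrableOn_Ioc (by continuity)
      have hnn : 0 ≤ᵐ[volume.restrict (Ioc (0:ℝ) (1/3))] (fun t : ℝ => 9*t) :=
        (ae_restrict_mem measurableSet_Ioc).mono (fun t ht => by
          simpa using (by nlinarith [ht.1] : (0:ℝ) ≤ 9*t))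
      rw [← ofReal_integral_eq_lintegral_ofReal hint9 hnn]
      congr 1
      rw [← intervalIntegral.integral_of_le (by norm_num : (0:ℝ) ≤ 1/3),
        intervalIntegral.integral_const_mul, integral_id]
      norm_num
    · have hb : (bridge s).b t = 1 - 3*t := by
        show max (1 - 3*t) 0 + max (3*t - 2) 0 = 1 - 3*t
        rw [max_eq_left (by linarith [ht.2] : (0:ℝ) ≤ 1 - 3*t),
          max_eq_right (by linarith [ht.2] : 3*t - 2 ≤ 0)]
        ring
      have hda : (bridge s).da t = 0 := by
        show (if t ≤ 1/3 then (0:ℝ) else if t ≤ 2/3 then 3*s else 0) = 0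
        rw [if_pos ht.2]
      have hdb : (bridge s).db t = -3 := by
        show (if t ≤ 1/3 then (-3:ℝ) else if t ≤ 2/3 then 0 else 3) = -3
        rw [if_pos ht.2]
      rw [hb, hda, hdb,
        show (damageExt f l (1 - 3*t))^2 * (0:ℝ)^2 + (1 - (1 - 3*t))^2 * (-3:ℝ)^2
          = (9*t)^2 from by ring,
        Real.sqrt_sq (by linarith [ht.1] : (0:ℝ) ≤ 9*t)]
  have hp2 : ∫⁻ t in Ioc (1/3:ℝ) (2/3),
      ENNReal.ofReal (Real.sqrt ((damageExt f l ((bridge s).b t))^2 * ((bridge s).da t)^2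
        + (1 - (bridge s).b t)^2 * ((bridge s).db t)^2)) = 0 := by
    rw [setLIntegral_congr_fun measurableSet_Ioc
      (fun t ht => ?_) (g := fun _ => 0)]
    · simp
    · have hb : (bridge s).b t = 0 := by
        show max (1 - 3*t) 0 + max (3*t - 2) 0 = 0
        rw [max_eq_right (by linarith [ht.1] : 1 - 3*t ≤ 0),
          max_eq_right (by linarith [ht.2] : 3*t - 2 ≤ 0)]
        ring
      have hdb : (bridge s).db t = 0 := by
        show (if t ≤ 1/3 then (-3:ℝ) else if t ≤ 2/3 then 0 else 3) = 0
        rw [if_neg (not_le.2 ht.1), if_pos ht.2]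
      have hD : damageExt f l ((bridge s).b t) = 0 := by
        rw [hb, damageExt, if_neg (by norm_num : (0:ℝ) ≠ 1)]
        simp [hf0]
      rw [hD, hdb]
      norm_num
  have hp3 : ∫⁻ t in Ioo (2/3:ℝ) 1,
      ENNReal.ofReal (Real.sqrt ((damageExt f l ((bridge s).b t))^2 * ((bridge s).da t)^2
        + (1 - (bridge s).b t)^2 * ((bridge s).db t)^2)) = ENNReal.ofReal (1/2) := by
    rw [setLIntegral_congr_fun measurableSet_Ioo
      (fun t ht => ?_) (g := fun t => ENNReal.ofReal (9 - 9*t))]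
    · have hint9 : IntegrableOn (fun t : ℝ => 9 - 9*t) (Ioo (2/3:ℝ) 1) :=
        (Continuous.integrableOn_Ioc (by continuity)).mono_set Set.Ioo_subset_Ioc_self
      have hnn : 0 ≤ᵐ[volume.restrict (Ioo (2/3:ℝ) 1)] (fun t : ℝ => 9 - 9*t) :=
        (ae_restrict_mem measurableSet_Ioo).mono (fun t ht => by
          simpa using (by nlinarith [ht.2] : (0:ℝ) ≤ 9 - 9*t))
      rw [← ofReal_integral_eq_lintegral_ofReal hint9 hnn]
      congr 1
      have e2 : IntervalIntegrable (fun x : ℝ => 9*x) volume (2/3) 1 :=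
        (continuous_const.mul continuous_id).intervalIntegrable _ _
      rw [← integral_Ioc_eq_integral_Ioo,
        ← intervalIntegral.integral_of_le (by norm_num : (2/3:ℝ) ≤ 1),
        intervalIntegral.integral_sub intervalIntegrable_const e2,
        intervalIntegral.integral_const, intervalIntegral.integral_const_mul, integral_id]
      norm_num
    · have hb : (bridge s).b t = 3*t - 2 := by
        show max (1 - 3*t) 0 + max (3*t - 2) 0 = 3*t - 2
        rw [max_eq_right (by linarith [ht.1] : 1 - 3*t ≤ 0),
          max_eq_left (by linarith [ht.1] : (0:ℝ) ≤ 3*t - 2)]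
        ring
      have hda : (bridge s).da t = 0 := by
        show (if t ≤ 1/3 then (0:ℝ) else if t ≤ 2/3 then 3*s else 0) = 0
        rw [if_neg (by push_neg; linarith [ht.1]), if_neg (by push_neg; exact ht.1)]
      have hdb : (bridge s).db t = 3 := by
        show (if t ≤ 1/3 then (-3:ℝ) else if t ≤ 2/3 then 0 else 3) = 3
        rw [if_neg (by push_neg; linarith [ht.1]), if_neg (by push_neg; exact ht.1)]
      rw [hb, hda, hdb,
        show (damageExt f l (3*t - 2))^2 * (0:ℝ)^2 + (1 - (3*t - 2))^2 * (3:ℝ)^2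
          = (9 - 9*t)^2 from by ring,
        Real.sqrt_sq (by linarith [ht.2] : (0:ℝ) ≤ 9 - 9*t)]
  rw [hp1, hp2, hp3, zero_add, ← ENNReal.ofReal_add (by norm_num) (by norm_num)]
  norm_num

noncomputable def zeroPair : H1Pair 1 where
  a := fun _ => 0
  b := fun _ => 1
  da := fun _ => 0
  db := fun _ => 0
  da_mem := by haveI := finiteIoo; exact memLp_const 0
  db_mem := by haveI := finiteIoo; exact memLp_const 0
  a_ftc := by intro x hx; simp
  b_ftc := by intro x hx; simp

lemma zeroPair_admissible : zeroPair.Admissible 0 :=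
  ⟨fun t _ => ⟨zero_le_one, le_rfl⟩, rfl, rfl, rfl, rfl⟩

lemma zeroPair_energy (f : ℝ → ℝ) (l : ℝ) : surfEnergy f l zeroPair = 0 := by
  rw [surfEnergy]
  have h : ∀ t : ℝ, (damageExt f l (zeroPair.b t))^2 * (zeroPair.da t)^2
      + (1 - zeroPair.b t)^2 * (zeroPair.db t)^2 = 0 := by
    intro t
    show (damageExt f l 1)^2 * (0:ℝ)^2 + (1 - 1)^2 * (0:ℝ)^2 = 0
    ring
  simp only [h, Real.sqrt_zero, ENNReal.ofReal_zero, lintegral_const, zero_mul]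

lemma iInf_le_one {f : ℝ → ℝ} {l s : ℝ} (hf0 : f 0 = 0) :
    (⨅ (P : H1Pair 1) (_ : P.Admissible s), surfEnergy f l P) ≤ 1 := by
  refine le_trans (iInf₂_le (bridge s) (bridge_admissible s)) ?_
  rw [bridge_energy hf0]

lemma surfDensity_le_one {f : ℝ → ℝ} {l s : ℝ} (hf0 : f 0 = 0) : surfDensity f l s ≤ 1 := by
  rw [surfDensity]
  calc (⨅ (P : H1Pair 1) (_ : P.Admissible s), surfEnergy f l P).toReal
      ≤ (1 : ENNReal).toReal := ENNReal.toReal_mono ENNReal.one_ne_top (iInf_le_one hf0)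
    _ = 1 := by simp

lemma surfDensity_zero (f : ℝ → ℝ) (l : ℝ) : surfDensity f l 0 = 0 := by
  rw [surfDensity]
  have h : (⨅ (P : H1Pair 1) (_ : P.Admissible 0), surfEnergy f l P) = 0 :=
    le_antisymm (le_trans (iInf₂_le zeroPair zeroPair_admissible)
      (le_of_eq (zeroPair_energy f l))) zero_le
  simp [h]

lemma surfDensity_mono {f1 f2 : ℝ → ℝ} {l1 l2 : ℝ}
    (hD : ∀ u ∈ Icc (0:ℝ) 1, 0 ≤ damageExt f1 l1 u ∧ damageExt f1 l1 u ≤ damageExt f2 l2 u)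
    (hf20 : f2 0 = 0) (s : ℝ) :
    surfDensity f1 l1 s ≤ surfDensity f2 l2 s := by
  have hE : ∀ P : H1Pair 1, P.Admissible s → surfEnergy f1 l1 P ≤ surfEnergy f2 l2 P := by
    intro P hP
    apply lintegral_mono_ae
    filter_upwards [ae_restrict_mem measurableSet_Ioo] with t ht
    have hbt : P.b t ∈ Icc (0:ℝ) 1 := hP.1 t ⟨ht.1.le, ht.2.le⟩
    obtain ⟨h0, h12⟩ := hD _ hbt
    apply ENNReal.ofReal_le_ofReal
    apply Real.sqrt_le_sqrt
    have hsq := pow_le_pow_left₀ h0 h12 2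
    nlinarith [sq_nonneg (P.da t), sq_nonneg (P.db t)]
  have hle : (⨅ (P : H1Pair 1) (_ : P.Admissible s), surfEnergy f1 l1 P)
      ≤ ⨅ (P : H1Pair 1) (_ : P.Admissible s), surfEnergy f2 l2 P :=
    iInf_mono fun P => iInf_mono fun hP => hE P hP
  rw [surfDensity, surfDensity]
  exact ENNReal.toReal_mono
    (ne_top_of_le_ne_top ENNReal.one_ne_top (iInf_le_one hf20)) hle

lemma abs_chain {c d : ℝ} (hcd : c ≤ d) {h bf : ℝ → ℝ} (hint : IntegrableOn h (Ioc c d))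
    (hb : ∀ x ∈ Icc c d, bf x = bf c + ∫ u in Ioc c x, h u)
    (hb1 : ∀ x ∈ Icc c d, bf x ≤ 1) :
    |(1 - bf c)^2/2 - (1 - bf d)^2/2| ≤ ∫ t in Ioc c d, (1 - bf t) * |h t| := by
  rw [← chain_quad hcd hint hb]
  calc |∫ t in Ioc c d, (1 - bf t) * h t|
      ≤ ∫ t in Ioc c d, |1 - bf t| * |h t| := by
        simpa [Real.norm_eq_abs, abs_mul] using
          norm_integral_le_integral_norm (μ := volume.restrict (Ioc c d))
            (fun t => (1 - bf t) * h t)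
    _ = ∫ t in Ioc c d, (1 - bf t) * |h t| := by
        apply setIntegral_congr_fun measurableSet_Ioc
        intro t ht
        show |1 - bf t| * |h t| = (1 - bf t) * |h t|
        rw [abs_of_nonneg (by linarith [hb1 t ⟨ht.1.le, ht.2⟩] : (0:ℝ) ≤ 1 - bf t)]

lemma energy_lower {f : ℝ → ℝ} {l s δ M : ℝ} (hs : 0 < s) (hδ0 : 0 < δ) (hδ1 : δ < 1)
    (hD0 : ∀ u ∈ Icc (0:ℝ) 1, 0 ≤ damageExt f l u)
    (hM : ∀ u ∈ Icc δ 1, M ≤ damageExt f l u)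
    (hMs : 1 ≤ M * s)
    (P : H1Pair 1) (hP : P.Admissible s) :
    ENNReal.ofReal ((1 - δ)^2) ≤ surfEnergy f l P := by
  obtain ⟨hbmem, ha0, ha1, hb0, hb1⟩ := hP
  by_cases hcase : ∀ t ∈ Icc (0:ℝ) 1, δ ≤ P.b t
  · -- the damage variable stays above δ; use the α-term
    obtain ⟨ga, hga_meas, hga_int, hga_ae, hga_ftc⟩ := nice_deriv P.da_mem
    have hM0 : 0 < M := by nlinarith
    have step1 : ∫⁻ t in Ioo (0:ℝ) 1, ENNReal.ofReal (M * |P.da t|) ≤ surfEnergy f l P := by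
      apply lintegral_mono_ae
      filter_upwards [ae_restrict_mem measurableSet_Ioo] with t ht
      apply ENNReal.ofReal_le_ofReal
      have hbt : P.b t ∈ Icc (0:ℝ) 1 := hbmem t ⟨ht.1.le, ht.2.le⟩
      have h1 : M ≤ damageExt f l (P.b t) := hM _ ⟨hcase t ⟨ht.1.le, ht.2.le⟩, hbt.2⟩
      calc M * |P.da t| ≤ damageExt f l (P.b t) * |P.da t| :=
            mul_le_mul_of_nonneg_right h1 (abs_nonneg _)
        _ = |damageExt f l (P.b t) * P.da t| := by
            rw [abs_mul, abs_of_nonneg (hD0 _ hbt)]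
        _ ≤ _ := le_sqrt_left _ _ _ _
    have step2 : ENNReal.ofReal (M * s)
        ≤ ∫⁻ t in Ioo (0:ℝ) 1, ENNReal.ofReal (M * |P.da t|) := by
      have hcg : ∫⁻ t in Ioo (0:ℝ) 1, ENNReal.ofReal (M * |P.da t|)
          = ∫⁻ t in Ioo (0:ℝ) 1, ENNReal.ofReal (M * |ga t|) := by
        apply lintegral_congr_ae
        filter_upwards [hga_ae] with t ht
        rw [ht]
      rw [hcg, ← ofReal_integral_eq_lintegral_ofReal
        ((hga_int.abs.const_mul M).integrableOn)
        (Eventually.of_forall (fun t => by positivity))]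
      apply ENNReal.ofReal_le_ofReal
      have hgaI : ∫ u in Ioc (0:ℝ) 1, ga u = s := by
        have h2 := P.a_ftc 1 ⟨zero_le_one, le_rfl⟩
        rw [ha1, ha0, hga_ftc 1 ⟨zero_le_one, le_rfl⟩] at h2
        linarith
      have h2 : s ≤ ∫ t in Ioo (0:ℝ) 1, |ga t| := by
        rw [Measure.restrict_congr_set Ioo_ae_eq_Ioc]
        calc s = |∫ u in Ioc (0:ℝ) 1, ga u| := by rw [hgaI]; exact (abs_of_pos hs).symm
          _ ≤ ∫ u in Ioc (0:ℝ) 1, |ga u| := by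
              simpa [Real.norm_eq_abs] using
                norm_integral_le_integral_norm (μ := volume.restrict (Ioc (0:ℝ) 1)) ga
      calc M * s ≤ M * ∫ t in Ioo (0:ℝ) 1, |ga t| := mul_le_mul_of_nonneg_left h2 hM0.le
        _ = ∫ t in Ioo (0:ℝ) 1, M * |ga t| := (integral_const_mul M _).symm
    refine le_trans (ENNReal.ofReal_le_ofReal (by nlinarith : (1-δ)^2 ≤ M * s))
      (le_trans step2 step1)
  · -- the damage variable dips below δ; use the β-term
    push_neg at hcase
    obtain ⟨tstar, htstar, hbtstar⟩ := hcase
    obtain ⟨gb, hgb_meas, hgb_int, hgb_ae, hgb_ftc⟩ := nice_deriv P.db_mem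
    set B : ℝ → ℝ := fun x => P.b 0 + ∫ u in (0:ℝ)..x, gb u with hBdef
    have hBcont : Continuous B := continuous_const.add (hgb_int.continuous_primitive 0)
    have hBeq : ∀ x ∈ Icc (0:ℝ) 1, P.b x = B x := by
      intro x hx
      rw [P.b_ftc x hx, hgb_ftc x hx]
      show P.b 0 + ∫ u in Ioc 0 x, gb u = P.b 0 + ∫ u in (0:ℝ)..x, gb u
      rw [intervalIntegral.integral_of_le hx.1]
    have hB_ftc : ∀ c' x : ℝ, c' ≤ x → B x = B c' + ∫ u in Ioc c' x, gb u := by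
      intro c' x hcx
      have h3 := intervalIntegral.integral_add_adjacent_intervals
        (hgb_int.intervalIntegrable (a := 0) (b := c'))
        (hgb_int.intervalIntegrable (a := c') (b := x))
      have h4 : ∫ u in Ioc c' x, gb u = ∫ u in c'..x, gb u :=
        (intervalIntegral.integral_of_le hcx).symm
      show P.b 0 + ∫ u in (0:ℝ)..x, gb u
          = (P.b 0 + ∫ u in (0:ℝ)..c', gb u) + ∫ u in Ioc c' x, gb u
      rw [h4]
      linarith
    have hBt : B tstar = P.b tstar := (hBeq tstar htstar).symm
    have hB0 : B 0 = 1 := by rw [← hBeq 0 ⟨le_rfl, zero_le_one⟩, hb0]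
    have hB1 : B 1 = 1 := by rw [← hBeq 1 ⟨zero_le_one, le_rfl⟩, hb1]
    set φ : ℝ → ℝ := fun t => (1 - B t) * |gb t| with hφ
    have hφint : IntegrableOn φ (Ioc (0:ℝ) 1) := by
      apply Integrable.bdd_mul (c := 1) hgb_int.abs.integrableOn
        ((continuous_const.sub hBcont).aestronglyMeasurable)
      filter_upwards [ae_restrict_mem measurableSet_Ioc] with t ht
      have hbt := hbmem t ⟨ht.1.le, ht.2⟩
      show ‖1 - B t‖ ≤ 1
      rw [Real.norm_eq_abs, abs_of_nonneg (by
        rw [← hBeq t ⟨ht.1.le, ht.2⟩]; linarith [hbt.2] : (0:ℝ) ≤ 1 - B t)]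
      rw [← hBeq t ⟨ht.1.le, ht.2⟩]
      linarith [hbt.1]
    have step1 : ∫⁻ t in Ioo (0:ℝ) 1, ENNReal.ofReal (φ t) ≤ surfEnergy f l P := by
      apply lintegral_mono_ae
      filter_upwards [hgb_ae, ae_restrict_mem measurableSet_Ioo] with t htg ht
      apply ENNReal.ofReal_le_ofReal
      have hbt : P.b t ∈ Icc (0:ℝ) 1 := hbmem t ⟨ht.1.le, ht.2.le⟩
      calc φ t = (1 - P.b t) * |P.db t| := by
            show (1 - B t) * |gb t| = (1 - P.b t) * |P.db t|
            rw [← hBeq t ⟨ht.1.le, ht.2.le⟩, ← htg]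
        _ = |(1 - P.b t) * P.db t| := by
            rw [abs_mul, abs_of_nonneg (by linarith [hbt.2] : (0:ℝ) ≤ 1 - P.b t)]
        _ ≤ _ := le_sqrt_right _ _ _ _
    have key : (1 - δ)^2 ≤ ∫ t in Ioo (0:ℝ) 1, φ t := by
      rw [Measure.restrict_congr_set Ioo_ae_eq_Ioc,
        show Ioc (0:ℝ) 1 = Ioc 0 tstar ∪ Ioc tstar 1 from
          (Set.Ioc_union_Ioc_eq_Ioc htstar.1 htstar.2).symm,
        setIntegral_union (Set.Ioc_disjoint_Ioc_of_le le_rfl) measurableSet_Ioc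
          (hφint.mono_set (Set.Ioc_subset_Ioc le_rfl htstar.2))
          (hφint.mono_set (Set.Ioc_subset_Ioc htstar.1 le_rfl))]
      have hd1 : |(1 - B 0)^2/2 - (1 - B tstar)^2/2| ≤ ∫ t in Ioc 0 tstar, φ t :=
        abs_chain htstar.1 hgb_int.integrableOn (fun x hx => hB_ftc 0 x hx.1)
          (fun x hx => by
            rw [← hBeq x ⟨hx.1, le_trans hx.2 htstar.2⟩]
            exact (hbmem x ⟨hx.1, le_trans hx.2 htstar.2⟩).2)
      have hd2 : |(1 - B tstar)^2/2 - (1 - B 1)^2/2| ≤ ∫ t in Ioc tstar 1, φ t :=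
        abs_chain htstar.2 hgb_int.integrableOn (fun x hx => hB_ftc tstar x hx.1)
          (fun x hx => by
            rw [← hBeq x ⟨le_trans htstar.1 hx.1, hx.2⟩]
            exact (hbmem x ⟨le_trans htstar.1 hx.1, hx.2⟩).2)
      have hBts : B tstar < δ := by rw [hBt]; exact hbtstar
      have hBts0 : 0 ≤ B tstar := by rw [hBt]; exact (hbmem tstar htstar).1
      rw [hB0] at hd1
      rw [hB1] at hd2
      have e1 : |(1 - (1:ℝ))^2/2 - (1 - B tstar)^2/2| = (1 - B tstar)^2/2 := by
        rw [abs_of_nonpos (by nlinarith)]; ring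
      have e2 : |(1 - B tstar)^2/2 - (1 - (1:ℝ))^2/2| = (1 - B tstar)^2/2 := by
        rw [abs_of_nonneg (by nlinarith)]; ring
      rw [e1] at hd1
      rw [e2] at hd2
      have hpow : (1-δ)^2 ≤ (1 - B tstar)^2 :=
        pow_le_pow_left₀ (by linarith) (by linarith) 2
      exact le_trans (by rw [add_halves]; exact hpow) (add_le_add hd1 hd2)
    have step0 : ENNReal.ofReal ((1-δ)^2) ≤ ∫⁻ t in Ioo (0:ℝ) 1, ENNReal.ofReal (φ t) := by
      rw [← ofReal_integral_eq_lintegral_ofReal (hφint.mono_set Set.Ioo_subset_Ioc_self)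
        ((ae_restrict_mem measurableSet_Ioo).mono (fun t ht => by
          have hbt := hbmem t ⟨ht.1.le, ht.2.le⟩
          have : (0:ℝ) ≤ 1 - B t := by
            rw [← hBeq t ⟨ht.1.le, ht.2.le⟩]; linarith [hbt.2]
          simpa [hφ] using mul_nonneg this (abs_nonneg (gb t))))]
      exact ENNReal.ofReal_le_ofReal key
    exact le_trans step0 step1

lemma damageExt_nonneg {f : ℝ → ℝ} {l : ℝ} (hf : AdmissibleDamage f l) :
    ∀ u ∈ Icc (0:ℝ) 1, 0 ≤ damageExt f l u := by
  intro u hu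
  rcases eq_or_lt_of_le hu.2 with h1 | h1
  · rw [h1, damageExt, if_pos rfl]
    exact hf.2.2.2.2.1.le
  · rw [damageExt, if_neg (ne_of_lt h1)]
    exact mul_nonneg (by linarith) (hf.2.2.1 u ⟨hu.1, h1⟩)

lemma damageExt_contOn {f : ℝ → ℝ} {l : ℝ} (hf : AdmissibleDamage f l) {δ : ℝ}
    (hδ0 : 0 < δ) : ContinuousOn (damageExt f l) (Icc δ 1) := by
  obtain ⟨hcont, hmono, hnonneg, hiff, hl, htend⟩ := hf
  intro u hu
  rcases lt_or_eq_of_le hu.2 with hu1 | hu1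
  · have hev : (fun x => (1 - x) * f x) =ᶠ[nhdsWithin u (Icc δ 1)] damageExt f l := by
      filter_upwards [mem_nhdsWithin_of_mem_nhds (Iio_mem_nhds hu1)] with x hx
      rw [damageExt, if_neg (ne_of_lt hx)]
    have h2 : ContinuousWithinAt f (Icc δ 1) u := by
      have h1 : ContinuousWithinAt f (Ico 0 1) u := hcont u ⟨by linarith [hu.1], hu1⟩
      rw [ContinuousWithinAt, nhdsWithin_restrict' (Icc δ 1) (Iio_mem_nhds hu1)]
      exact h1.mono_left (nhdsWithin_mono u
        (fun x hx => ⟨le_trans hδ0.le hx.1.1, hx.2⟩))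
    have hcw : ContinuousWithinAt (fun x => (1 - x) * f x) (Icc δ 1) u :=
      (continuousWithinAt_const.sub continuousWithinAt_id).mul h2
    exact hcw.congr_of_eventuallyEq hev.symm (by rw [damageExt, if_neg (ne_of_lt hu1)])
  · rw [ContinuousWithinAt, hu1]
    have hval : damageExt f l 1 = l := by rw [damageExt, if_pos rfl]
    rw [hval]
    have hle : nhdsWithin (1:ℝ) (Icc δ 1) ≤ nhdsWithin 1 (Iic 1) :=
      nhdsWithin_mono 1 (fun x hx => hx.2)
    have hsplit : nhdsWithin (1:ℝ) (Iic 1) = nhdsWithin 1 (Iio 1) ⊔ pure 1 := by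
      rw [← Set.Iio_union_right, nhdsWithin_union, nhdsWithin_singleton]
    have t1 : Tendsto (damageExt f l) (nhdsWithin (1:ℝ) (Iio 1)) (nhds l) := by
      apply htend.congr'
      filter_upwards [self_mem_nhdsWithin] with x hx
      rw [damageExt, if_neg (ne_of_lt hx)]
    have t2 : Tendsto (damageExt f l) (pure (1:ℝ)) (nhds l) := by
      rw [tendsto_pure_left]
      intro sset hs
      rw [hval]
      exact mem_of_mem_nhds hs
    apply Tendsto.mono_left _ hle
    rw [hsplit, tendsto_sup]
    exact ⟨t1, t2⟩

lemma eventually_unif {F : ℕ → ℝ → ℝ} {L : ℕ → ℝ} (hadm : ∀ j, AdmissibleDamage (F j) (L j))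
    (hL_mono : Monotone L) (hL_lim : Tendsto L atTop atTop)
    (hmono : ∀ j, ∀ x ∈ Ico (0:ℝ) 1, F j x ≤ F (j+1) x)
    (hlim : ∀ x ∈ Ioo (0:ℝ) 1, Tendsto (fun j => F j x) atTop atTop)
    {δ : ℝ} (hδ0 : 0 < δ) (hδ1 : δ < 1) (M : ℝ) :
    ∃ N, ∀ j ≥ N, ∀ u ∈ Icc δ 1, M ≤ damageExt (F j) (L j) u := by
  have hFmono : ∀ x ∈ Ico (0:ℝ) 1, Monotone (fun j => F j x) :=
    fun x hx => monotone_nat_of_le_succ (fun j => hmono j x hx)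
  have hDmono : ∀ u ∈ Icc δ 1, Monotone (fun j => damageExt (F j) (L j) u) := by
    intro u hu
    rcases eq_or_lt_of_le hu.2 with h1 | h1
    · intro j k hjk
      simp only [damageExt, h1, if_pos rfl]
      exact hL_mono hjk
    · intro j k hjk
      simp only [damageExt, if_neg (ne_of_lt h1)]
      exact mul_le_mul_of_nonneg_left
        (hFmono u ⟨le_trans hδ0.le hu.1, h1⟩ hjk) (by linarith)
  have hpt : ∀ u ∈ Icc δ 1, ∃ j, M < damageExt (F j) (L j) u := by
    intro u hu
    rcases eq_or_lt_of_le hu.2 with h1 | h1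
    · obtain ⟨j, hj⟩ := (hL_lim.eventually_gt_atTop M).exists
      refine ⟨j, ?_⟩
      rw [h1, damageExt, if_pos rfl]
      exact hj
    · have h2 : Tendsto (fun j => (1 - u) * F j u) atTop atTop :=
        (hlim u ⟨lt_of_lt_of_le hδ0 hu.1, h1⟩).const_mul_atTop (by linarith)
      obtain ⟨j, hj⟩ := (h2.eventually_gt_atTop M).exists
      refine ⟨j, ?_⟩
      rw [damageExt, if_neg (ne_of_lt h1)]
      exact hj
  have hopen : ∀ j : ℕ, ∃ O : Set ℝ, IsOpen O ∧
      (damageExt (F j) (L j)) ⁻¹' (Ioi M) ∩ Icc δ 1 = O ∩ Icc δ 1 :=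
    fun j => (continuousOn_iff'.mp (damageExt_contOn (hadm j) hδ0)) (Ioi M) isOpen_Ioi
  choose O hOopen hOeq using hopen
  have hcov : Icc δ 1 ⊆ ⋃ j, O j := by
    intro u hu
    obtain ⟨j, hj⟩ := hpt u hu
    have hmem : u ∈ (damageExt (F j) (L j)) ⁻¹' (Ioi M) ∩ Icc δ 1 := ⟨hj, hu⟩
    rw [hOeq j] at hmem
    exact mem_iUnion.mpr ⟨j, hmem.1⟩
  obtain ⟨I, hI⟩ := isCompact_Icc.elim_finite_subcover O hOopen hcov
  refine ⟨I.sup id, fun j hj u hu => ?_⟩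
  obtain ⟨i, hiI, hui⟩ := mem_iUnion₂.mp (hI hu)
  have hmem : u ∈ (damageExt (F i) (L i)) ⁻¹' (Ioi M) ∩ Icc δ 1 := by
    rw [hOeq i]
    exact ⟨hui, hu⟩
  have hiN : i ≤ j := le_trans (Finset.le_sup (f := id) hiI) hj
  exact le_trans (le_of_lt hmem.1) (hDmono u hu hiN)

/-- If `(f_j)` is a sequence of admissible damage functions with
limit values `ℓ_j ↑ ∞`, `f_j ≤ f_{j+1}` pointwise on `[0,1)`, and `f_j(s) ↑ ∞` for
every `s ∈ (0,1)`, then the surface energy densities satisfy `g_j ≤ g_{j+1}` pointwise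
and `g_j(s) → χ_{(0,∞)}(s)` for every `s ∈ [0,∞)`: `g_j(0) = 0` for all `j` and
`g_j(s) → 1` for every `s > 0`. -/
theorem surfDensity_seq_increasing_to_griffith (F : ℕ → ℝ → ℝ) (L : ℕ → ℝ)
    (hadm : ∀ j, AdmissibleDamage (F j) (L j))
    (hL_mono : Monotone L)
    (hL_lim : Filter.Tendsto L Filter.atTop Filter.atTop)
    (hmono : ∀ j, ∀ x ∈ Set.Ico (0:ℝ) 1, F j x ≤ F (j+1) x)
    (hlim : ∀ x ∈ Set.Ioo (0:ℝ) 1,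
      Filter.Tendsto (fun j => F j x) Filter.atTop Filter.atTop) :
    (∀ j, ∀ s : ℝ, 0 ≤ s → surfDensity (F j) (L j) s ≤ surfDensity (F (j+1)) (L (j+1)) s) ∧
    (∀ j, surfDensity (F j) (L j) 0 = 0) ∧
    (∀ s : ℝ, 0 < s →
      Filter.Tendsto (fun j => surfDensity (F j) (L j) s) Filter.atTop (nhds 1)) := by
  have hf0 : ∀ j, F j 0 = 0 := fun j => ((hadm j).2.2.2.1 0 ⟨le_rfl, one_pos⟩).2 rfl
  refine ⟨?_, ?_, ?_⟩
  · intro j s _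
    apply surfDensity_mono _ (hf0 (j+1))
    intro u hu
    refine ⟨damageExt_nonneg (hadm j) u hu, ?_⟩
    rcases eq_or_lt_of_le hu.2 with h1 | h1
    · simp only [damageExt, h1, if_pos rfl]
      exact hL_mono (Nat.le_succ j)
    · simp only [damageExt, if_neg (ne_of_lt h1)]
      exact mul_le_mul_of_nonneg_left (hmono j u ⟨hu.1, h1⟩) (by linarith)
  · intro j
    exact surfDensity_zero _ _
  · intro s hs
    rw [Metric.tendsto_atTop]
    intro ε hε
    set ε' : ℝ := min (ε/2) (1/2) with hε'def
    have hε'0 : 0 < ε' := lt_min (by linarith) (by norm_num)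
    have hε'1 : ε' ≤ 1/2 := min_le_right _ _
    have hε'ε : ε' ≤ ε/2 := min_le_left _ _
    set δ : ℝ := 1 - Real.sqrt (1 - ε') with hδdef
    have hsq : Real.sqrt (1 - ε') ^ 2 = 1 - ε' := Real.sq_sqrt (by linarith)
    have hδ0 : 0 < δ := by
      have : Real.sqrt (1 - ε') < 1 := by
        calc Real.sqrt (1 - ε') < Real.sqrt 1 :=
          Real.sqrt_lt_sqrt (by linarith) (by linarith)
        _ = 1 := Real.sqrt_one
      simp only [hδdef]
      linarith
    have hδ1 : δ < 1 := by
      have : 0 < Real.sqrt (1 - ε') := Real.sqrt_pos.mpr (by linarith)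
      simp only [hδdef]
      linarith
    obtain ⟨N, hN⟩ := eventually_unif hadm hL_mono hL_lim hmono hlim hδ0 hδ1 (1/s)
    refine ⟨N, fun j hj => ?_⟩
    have hub : surfDensity (F j) (L j) s ≤ 1 := surfDensity_le_one (hf0 j)
    have hlb : 1 - ε' ≤ surfDensity (F j) (L j) s := by
      have hE : ∀ (P : H1Pair 1), P.Admissible s →
          ENNReal.ofReal ((1 - δ)^2) ≤ surfEnergy (F j) (L j) P :=
        fun P hP => energy_lower hs hδ0 hδ1 (damageExt_nonneg (hadm j))
          (fun u hu => hN j hj u hu) (by field_simp; exact le_rfl) P hP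
      have hle : ENNReal.ofReal ((1 - δ)^2)
          ≤ ⨅ (P : H1Pair 1) (_ : P.Admissible s), surfEnergy (F j) (L j) P :=
        le_iInf₂ hE
      have h3 : (ENNReal.ofReal ((1 - δ)^2)).toReal
          ≤ (⨅ (P : H1Pair 1) (_ : P.Admissible s), surfEnergy (F j) (L j) P).toReal :=
        ENNReal.toReal_mono
          (ne_top_of_le_ne_top ENNReal.one_ne_top (iInf_le_one (hf0 j))) hle
      rw [ENNReal.toReal_ofReal (by positivity)] at h3
      have h4 : (1 - δ)^2 = 1 - ε' := by
        simp only [hδdef]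
        rw [show (1 : ℝ) - (1 - Real.sqrt (1 - ε')) = Real.sqrt (1 - ε') from by ring, hsq]
      rw [surfDensity]
      linarith
    rw [Real.dist_eq, abs_of_nonpos (by linarith)]
    linarith
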